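/- Let η : ℂ → ℂ be the Dirichlet eta function, defined by η(s) = (1 − 2^{1−s})·ζ(s) for s ≠ 1 and η(1) = log 2, where ζ is the Riemann zeta function; η is the entire function satisfying η(s) = ∑_{m≥1} (−1)^{m−1} m^{−s} for Re s > 0, and η(0) = 1/2. Then for every s ∈ ℂ with Re s > 0, the Newton series ∑_{n=0}^∞ (∑_{k=0}^n P_k(n)·η(k))·P_n(s) converges and its sum equals η(s). -/

import Mathlib

open Filter Finset Topology

/-- The `n`-th Pochhammer–Newton polynomial `P_n(α) = ((-1)^n / n!) ∏_{m=0}^{n-1} (α - m)`. -/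
noncomputable def pochNewton (n : ℕ) (α : ℂ) : ℂ :=
  ((-1 : ℂ) ^ n / (n.factorial : ℂ)) * ∏ m ∈ Finset.range n, (α - (m : ℂ))

/-- The Dirichlet eta function `η(s) = (1 - 2^{1-s}) ζ(s)` (with `η(1) = log 2`). -/
noncomputable def dirichletEta (s : ℂ) : ℂ :=
  if s = 1 then (Real.log 2 : ℂ) else (1 - (2 : ℂ) ^ (1 - s)) * riemannZeta s

lemma pochNewton_zero (α : ℂ) : pochNewton 0 α = 1 := by simp [pochNewton]

lemma pochNewton_succ (n : ℕ) (α : ℂ) :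
    pochNewton (n + 1) α = pochNewton n α * (((n : ℂ) - α) / ((n : ℂ) + 1)) := by
  have h1 : (((n+1).factorial : ℕ) : ℂ) = (n.factorial : ℂ) * ((n : ℂ) + 1) := by
    push_cast [Nat.factorial_succ]; ring
  have h2 : ((n.factorial : ℕ) : ℂ) ≠ 0 := by exact_mod_cast n.factorial_ne_zero
  have h3 : ((n : ℂ) + 1) ≠ 0 := by
    have := Nat.cast_add_one_ne_zero (R := ℂ) n
    simpa using this
  rw [pochNewton, pochNewton, Finset.prod_range_succ, h1]
  field_simp
  ring

lemma norm_pochNewton_succ (n : ℕ) (α : ℂ) :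
    ‖pochNewton (n + 1) α‖ = ‖pochNewton n α‖ * (‖α - (n : ℂ)‖ / ((n : ℝ) + 1)) := by
  rw [pochNewton_succ, norm_mul, norm_div]
  congr 2
  · rw [← norm_neg]; congr 1; ring
  · have : ((n : ℂ) + 1) = (((n : ℝ) + 1 : ℝ) : ℂ) := by push_cast; ring
    rw [this, Complex.norm_real, Real.norm_of_nonneg (by positivity)]

lemma norm_pochNewton_le (α : ℂ) (K : ℕ) (hK : ‖α‖ ≤ K) :
    ∀ n, ‖pochNewton n α‖ ≤ ((n : ℝ) + 1) ^ K := by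
  intro n
  induction n with
  | zero => simp [pochNewton_zero]
  | succ n ih =>
    rw [norm_pochNewton_succ]
    have hn1 : (0:ℝ) < (n:ℝ) + 1 := by positivity
    have h1 : ‖α - (n : ℂ)‖ ≤ (K : ℝ) + n := by
      calc ‖α - (n : ℂ)‖ ≤ ‖α‖ + ‖(n : ℂ)‖ := norm_sub_le _ _
        _ ≤ (K : ℝ) + n := by
            rw [Complex.norm_natCast]
            exact add_le_add hK le_rfl
    have key : ((n:ℝ) + 1) ^ K * (((K:ℝ) + n) / ((n:ℝ) + 1)) ≤ ((n:ℝ) + 1 + 1) ^ K := by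
      have hb : (1 + 1/((n:ℝ)+1)) ^ K ≥ 1 + K * (1/((n:ℝ)+1)) := by
        apply one_add_mul_le_pow
        have : (0:ℝ) ≤ 1/((n:ℝ)+1) := by positivity
        linarith
      have h2 : ((n:ℝ) + 1 + 1) ^ K = ((n:ℝ)+1)^K * (1 + 1/((n:ℝ)+1))^K := by
        rw [← mul_pow]; congr 1; field_simp
      rw [h2]
      have h3 : ((K:ℝ) + n) / ((n:ℝ) + 1) ≤ 1 + K * (1/((n:ℝ)+1)) := by
        rw [div_le_iff₀ hn1]
        have he : (1 + (K:ℝ) * (1/((n:ℝ)+1))) * ((n:ℝ)+1) = (n:ℝ)+1+K := by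
          field_simp
        rw [he]; linarith
      calc ((n:ℝ)+1)^K * (((K:ℝ) + n)/((n:ℝ)+1)) ≤ ((n:ℝ)+1)^K * (1 + K * (1/((n:ℝ)+1))) := by
            apply mul_le_mul_of_nonneg_left h3 (by positivity)
        _ ≤ ((n:ℝ)+1)^K * (1 + 1/((n:ℝ)+1))^K := by
            apply mul_le_mul_of_nonneg_left hb (by positivity)
    calc ‖pochNewton n α‖ * (‖α - (n : ℂ)‖ / ((n : ℝ) + 1))
        ≤ ((n:ℝ)+1)^K * (((K:ℝ) + n) / ((n:ℝ) + 1)) := by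
          gcongr
      _ ≤ ((n:ℝ) + 1 + 1) ^ K := key
      _ = (((n+1:ℕ):ℝ) + 1) ^ K := by push_cast; ring

lemma norm_pochNewton_prod (α : ℂ) (n : ℕ) :
    ‖pochNewton n α‖ = ∏ m ∈ range n, (‖α - (m:ℂ)‖ / ((m:ℝ)+1)) := by
  induction n with
  | zero => simp [pochNewton_zero]
  | succ n ih => rw [norm_pochNewton_succ, ih, Finset.prod_range_succ]

lemma sum_inv_sq_le (n : ℕ) : ∑ m ∈ range n, (1/((m:ℝ)+1))^2 ≤ 2 := by
  have h : ∑ m ∈ range n, (1/((m:ℝ)+1))^2 ≤ 2 - 2/((n:ℝ)+1) := by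
    induction n with
    | zero => simp
    | succ n ih =>
      rw [Finset.sum_range_succ]
      have h1 : (1/((n:ℝ)+1))^2 ≤ 2/((n:ℝ)+1) - 2/((n:ℝ)+1+1) := by
        have e1 : 2/((n:ℝ)+1) - 2/((n:ℝ)+1+1) = 2/(((n:ℝ)+1)*((n:ℝ)+2)) := by
          field_simp; ring
        have e2 : (1/((n:ℝ)+1))^2 = 1/(((n:ℝ)+1)*((n:ℝ)+1)) := by
          rw [pow_two, div_mul_div_comm, one_mul]
        rw [e1, e2]
        rw [div_le_div_iff₀ (by positivity) (by positivity)]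
        nlinarith [Nat.cast_nonneg (α := ℝ) n]
      push_cast
      linarith
  have h2 : (0:ℝ) ≤ 2/((n:ℝ)+1) := by positivity
  linarith

lemma log_le_sum_inv (n : ℕ) : Real.log ((n:ℝ)+1) ≤ ∑ m ∈ range n, 1/((m:ℝ)+1) := by
  induction n with
  | zero => simp
  | succ n ih =>
    rw [Finset.sum_range_succ]
    have h1 : Real.log ((n:ℝ)+1+1) = Real.log ((n:ℝ)+1) + Real.log (((n:ℝ)+2)/((n:ℝ)+1)) := by
      rw [← Real.log_mul (by positivity) (by positivity)]
      congr 1; field_simp; ring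
    have h2 : Real.log (((n:ℝ)+2)/((n:ℝ)+1)) ≤ 1/((n:ℝ)+1) := by
      have hx := Real.log_le_sub_one_of_pos (x := ((n:ℝ)+2)/((n:ℝ)+1)) (by positivity)
      have he : ((n:ℝ)+2)/((n:ℝ)+1) - 1 = 1/((n:ℝ)+1) := by
        field_simp
        norm_num
      rw [he] at hx
      exact hx
    push_cast
    linarith

lemma norm_pochNewton_decay (α : ℂ) (hβ : 0 ≤ α.re + 1) (n : ℕ) :
    ‖pochNewton n α‖ ≤ Real.exp (‖α + 1‖^2) * ((n:ℝ)+1) ^ (-(α.re+1)) := by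
  set β : ℝ := α.re + 1 with hβdef
  set A : ℝ := ‖α + 1‖^2 with hAdef
  have hA0 : 0 ≤ A := by positivity
  have hAeq : A = β^2 + α.im^2 := by
    rw [hAdef, Complex.sq_norm, Complex.normSq_apply]
    simp [Complex.add_re, Complex.add_im, hβdef]
    ring
  have fact : ∀ m : ℕ, ‖α - (m:ℂ)‖ / ((m:ℝ)+1)
      ≤ Real.exp (-β * (1/((m:ℝ)+1)) + A/2 * (1/((m:ℝ)+1))^2) := by
    intro m
    set c : ℝ := (m:ℝ)+1 with hcdef
    have hc : (0:ℝ) < c := by positivity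
    have h1 : ‖α - (m:ℂ)‖^2 = (β - c)^2 + α.im^2 := by
      rw [Complex.sq_norm, Complex.normSq_apply]
      simp [Complex.sub_re, Complex.sub_im, hβdef, hcdef]
      ring
    have hsq : (‖α - (m:ℂ)‖ / c)^2 = 1 - 2*β*(1/c) + A*(1/c)^2 := by
      rw [div_pow, h1, hAeq]
      field_simp
      ring
    have hexp : (‖α - (m:ℂ)‖ / c)^2 ≤ Real.exp (-2*β*(1/c) + A*(1/c)^2) := by
      rw [hsq]
      have := Real.add_one_le_exp (-2*β*(1/c) + A*(1/c)^2)
      linarith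
    have hrw : Real.exp (-β * (1/c) + A/2 * (1/c)^2)^2
        = Real.exp (-2*β*(1/c) + A*(1/c)^2) := by
      rw [pow_two, ← Real.exp_add]; congr 1; ring
    have h2 : (‖α - (m:ℂ)‖ / c)^2 ≤ Real.exp (-β * (1/c) + A/2 * (1/c)^2)^2 := by
      rw [hrw]; exact hexp
    have hnn : 0 ≤ ‖α - (m:ℂ)‖ / c := by positivity
    exact (pow_le_pow_iff_left₀ hnn (Real.exp_pos _).le two_ne_zero).1 h2
  calc ‖pochNewton n α‖ = ∏ m ∈ range n, (‖α - (m:ℂ)‖ / ((m:ℝ)+1)) :=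
        norm_pochNewton_prod α n
    _ ≤ ∏ m ∈ range n, Real.exp (-β * (1/((m:ℝ)+1)) + A/2 * (1/((m:ℝ)+1))^2) := by
        apply Finset.prod_le_prod
        · intro m _; positivity
        · intro m _; exact fact m
    _ = Real.exp (∑ m ∈ range n, (-β * (1/((m:ℝ)+1)) + A/2 * (1/((m:ℝ)+1))^2)) := by
        rw [Real.exp_sum]
    _ ≤ Real.exp (-β * Real.log ((n:ℝ)+1) + A) := by
        apply Real.exp_le_exp.2
        rw [Finset.sum_add_distrib]
        have s1 : ∑ m ∈ range n, -β * (1/((m:ℝ)+1)) ≤ -β * Real.log ((n:ℝ)+1) := by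
          rw [← Finset.mul_sum]
          have := log_le_sum_inv n
          nlinarith
        have s2 : ∑ m ∈ range n, A/2 * (1/((m:ℝ)+1))^2 ≤ A := by
          rw [← Finset.mul_sum]
          have := sum_inv_sq_le n
          nlinarith
        linarith
    _ = Real.exp A * ((n:ℝ)+1) ^ (-β) := by
        rw [Real.rpow_def_of_pos (by positivity), ← Real.exp_add]
        congr 1; ring

lemma pochNewton_shift (N : ℕ) (s : ℂ) :
    pochNewton (N+1) s = pochNewton N (s-1) * (-s / ((N:ℂ)+1)) := by
  unfold pochNewton
  have hp : ∏ m ∈ range (N+1), (s - (m:ℂ)) = (∏ m ∈ range N, ((s-1) - (m:ℂ))) * s := by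
    rw [Finset.prod_range_succ']
    congr 1
    · apply Finset.prod_congr rfl
      intro m _
      push_cast; ring
    · simp
  rw [hp]
  have h1 : (((N+1).factorial : ℕ) : ℂ) = (N.factorial : ℂ) * ((N:ℂ)+1) := by
    push_cast [Nat.factorial_succ]; ring
  rw [h1]
  have h2 : ((N.factorial : ℕ):ℂ) ≠ 0 := by exact_mod_cast N.factorial_ne_zero
  have h3 : ((N:ℂ)+1) ≠ 0 := by simpa using Nat.cast_add_one_ne_zero (R := ℂ) N
  field_simp
  ring

lemma sum_range_pochNewton (s : ℂ) (N : ℕ) :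
    ∑ n ∈ range (N+1), pochNewton n s = pochNewton N (s-1) := by
  induction N with
  | zero => simp [pochNewton_zero]
  | succ N ih =>
    rw [Finset.sum_range_succ, ih, pochNewton_succ N (s-1), pochNewton_shift N s]
    have h3 : ((N:ℂ)+1) ≠ 0 := by simpa using Nat.cast_add_one_ne_zero (R := ℂ) N
    field_simp
    ring

lemma summable_norm_pochNewton {α : ℂ} (hα : 0 < α.re) :
    Summable (fun n : ℕ => ‖pochNewton n α‖) := by
  apply Summable.of_nonneg_of_le (fun n => norm_nonneg _)
    (fun n => norm_pochNewton_decay α (by linarith) n)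
  apply Summable.mul_left
  have h : Summable (fun n : ℕ => ((n:ℝ)) ^ (-(α.re+1))) := by
    rw [Real.summable_nat_rpow]
    linarith
  have h2 : Summable (fun n : ℕ => (((n+1:ℕ)):ℝ) ^ (-(α.re+1))) := (summable_nat_add_iff 1).2 h
  exact h2.congr (fun n => by push_cast; ring_nf)

lemma tendsto_pochNewton_zero {α : ℂ} (hα : 0 < α.re + 1) :
    Tendsto (fun n : ℕ => pochNewton n α) atTop (𝓝 0) := by
  apply squeeze_zero_norm (fun n => norm_pochNewton_decay α hα.le n)
  rw [show (0:ℝ) = Real.exp (‖α+1‖^2) * 0 from (mul_zero _).symm]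
  apply Tendsto.const_mul
  have h : Tendsto (fun x : ℝ => x ^ (-(α.re+1))) atTop (𝓝 0) := tendsto_rpow_neg_atTop hα
  exact h.comp (tendsto_atTop_add_const_right atTop 1 tendsto_natCast_atTop_atTop)

lemma hasSum_pochNewton_zero {s : ℂ} (hs : 0 < s.re) :
    HasSum (fun n : ℕ => pochNewton n s) 0 := by
  have hsum : Summable (fun n : ℕ => pochNewton n s) := by
    apply Summable.of_norm
    apply summable_norm_pochNewton
    linarith
  have h1 := hsum.hasSum.tendsto_sum_nat
  have h2 : Tendsto (fun N : ℕ => ∑ n ∈ range (N+1), pochNewton n s) atTop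
      (𝓝 (∑' n, pochNewton n s)) := h1.comp (tendsto_add_atTop_nat 1)
  have h3 : Tendsto (fun N : ℕ => pochNewton N (s-1)) atTop (𝓝 0) := by
    apply tendsto_pochNewton_zero
    simp only [Complex.sub_re, Complex.one_re]
    linarith
  have h4 : (∑' n, pochNewton n s) = 0 :=
    tendsto_nhds_unique (h2.congr (fun N => sum_range_pochNewton s N)) h3
  rw [← h4]; exact hsum.hasSum

lemma pochNewton_rec (n : ℕ) (s : ℂ) :
    pochNewton (n+1) s * ((n:ℂ)+1) = ((n:ℂ) - s) * pochNewton n s := by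
  rw [pochNewton_succ]
  have h3 : ((n:ℂ)+1) ≠ 0 := by simpa using Nat.cast_add_one_ne_zero (R := ℂ) n
  field_simp

lemma aux_summable_pow (K : ℕ) {ρ : ℝ} (h0 : 0 < ρ) (h1 : ρ < 1) :
    Summable (fun n : ℕ => ((n:ℝ)+1)^K * ρ^n) := by
  have h := summable_pow_mul_geometric_of_norm_lt_one (R := ℝ) (r := ρ) K
    (by rw [Real.norm_eq_abs, abs_of_pos h0]; exact h1)
  have h2 := (summable_nat_add_iff 1).2 h
  have h3 := h2.mul_left (ρ⁻¹)
  apply h3.congr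
  intro n
  push_cast
  field_simp
  ring

lemma summable_poch_mul_pow (s : ℂ) {z : ℂ} (hz : ‖z‖ < 1) :
    Summable (fun n : ℕ => pochNewton n s * z^n) := by
  set K := ⌈‖s‖⌉₊ with hK
  set ρ := (‖z‖+1)/2 with hρ
  have hρ0 : 0 < ρ := by positivity
  have hρ1 : ρ < 1 := by rw [hρ]; linarith
  have hzρ : ‖z‖ ≤ ρ := by rw [hρ]; linarith
  apply Summable.of_norm
  apply Summable.of_nonneg_of_le (fun n => norm_nonneg _) _ (aux_summable_pow K hρ0 hρ1)
  intro n
  rw [norm_mul, norm_pow]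
  have h1 := norm_pochNewton_le s K (Nat.le_ceil _) n
  have h2 : ‖z‖^n ≤ ρ^n := pow_le_pow_left₀ (norm_nonneg z) hzρ n
  exact mul_le_mul h1 h2 (by positivity) (by positivity)

lemma summable_poch_mul_deriv (s : ℂ) {z : ℂ} (hz : ‖z‖ < 1) :
    Summable (fun n : ℕ => pochNewton n s * ((n:ℂ) * z^(n-1))) := by
  set K := ⌈‖s‖⌉₊ with hK
  set ρ := (‖z‖+1)/2 with hρ
  have hρ0 : 0 < ρ := by positivity
  have hρ1 : ρ < 1 := by rw [hρ]; linarith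
  have hzρ : ‖z‖ ≤ ρ := by rw [hρ]; linarith
  apply Summable.of_norm
  apply Summable.of_nonneg_of_le (fun n => norm_nonneg _) _
    ((aux_summable_pow (K+1) hρ0 hρ1).mul_left ρ⁻¹)
  intro n
  match n with
  | 0 => simp; positivity
  | (m+1) =>
    rw [norm_mul, norm_mul, norm_pow, Complex.norm_natCast]
    have h1 := norm_pochNewton_le s K (Nat.le_ceil _) (m+1)
    have h2 : ‖z‖^(m+1-1) ≤ ρ^m := by
      simpa using pow_le_pow_left₀ (norm_nonneg z) hzρ m
    have h3 : (((m+1:ℕ)):ℝ) ≤ ((m:ℝ)+1)+1 := by push_cast; linarith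
    have hcast : (((m+1:ℕ)):ℝ) = (m:ℝ)+1 := by push_cast; ring
    have key : ‖pochNewton (m+1) s‖ * ((((m+1:ℕ)):ℝ) * ‖z‖^(m+1-1))
        ≤ (((m:ℝ)+1)+1)^K * (((m:ℝ)+1+1) * ρ^m) := by
      apply mul_le_mul
      · calc ‖pochNewton (m+1) s‖ ≤ (((m+1:ℕ):ℝ)+1)^K := h1
          _ = (((m:ℝ)+1)+1)^K := by rw [hcast]
      · apply mul_le_mul h3 h2 (by positivity) (by positivity)
      · positivity
      · positivity
    calc ‖pochNewton (m+1) s‖ * ((((m+1:ℕ)):ℝ) * ‖z‖^(m+1-1))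
        ≤ (((m:ℝ)+1)+1)^K * (((m:ℝ)+1+1) * ρ^m) := key
      _ = (((m:ℝ)+1)+1)^(K+1) * ρ^m := by ring
      _ = ρ⁻¹ * ((((m+1:ℕ):ℝ)+1)^(K+1) * ρ^(m+1)) := by
          rw [hcast]
          field_simp
          ring

lemma summable_n_poch_mul_pow (s : ℂ) {z : ℂ} (hz : ‖z‖ < 1) :
    Summable (fun n : ℕ => (n:ℂ) * (pochNewton n s * z^n)) := by
  set K := ⌈‖s‖⌉₊ with hK
  set ρ := (‖z‖+1)/2 with hρ
  have hρ0 : 0 < ρ := by positivity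
  have hρ1 : ρ < 1 := by rw [hρ]; linarith
  have hzρ : ‖z‖ ≤ ρ := by rw [hρ]; linarith
  apply Summable.of_norm
  apply Summable.of_nonneg_of_le (fun n => norm_nonneg _) _ (aux_summable_pow (K+1) hρ0 hρ1)
  intro n
  rw [norm_mul, norm_mul, norm_pow, Complex.norm_natCast]
  have h1 := norm_pochNewton_le s K (Nat.le_ceil _) n
  have h2 : ‖z‖^n ≤ ρ^n := pow_le_pow_left₀ (norm_nonneg z) hzρ n
  have h3 : ((n:ℝ)) ≤ (n:ℝ)+1 := by linarith
  calc (n:ℝ) * (‖pochNewton n s‖ * ‖z‖^n) ≤ ((n:ℝ)+1) * (((n:ℝ)+1)^K * ρ^n) := by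
        apply mul_le_mul h3 (mul_le_mul h1 h2 (by positivity) (by positivity))
          (by positivity) (by positivity)
    _ = ((n:ℝ)+1)^(K+1) * ρ^n := by ring

lemma hasDerivAt_pochSeries (s : ℂ) {ρ : ℝ} (h0 : 0 < ρ) (h1 : ρ < 1) {y : ℝ} (hy : |y| < ρ) :
    HasDerivAt (fun x : ℝ => ∑' n : ℕ, pochNewton n s * ((x:ℝ):ℂ)^n)
      (∑' n : ℕ, pochNewton n s * ((n:ℂ) * ((y:ℝ):ℂ)^(n-1))) y := by
  set K := ⌈‖s‖⌉₊ with hK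
  apply hasDerivAt_tsum_of_isPreconnected
    (g := fun (n:ℕ) (x:ℝ) => pochNewton n s * ((x:ℝ):ℂ)^n)
    (g' := fun (n:ℕ) (x:ℝ) => pochNewton n s * ((n:ℂ) * ((x:ℝ):ℂ)^(n-1)))
    (u := fun n : ℕ => ρ⁻¹ * (((n:ℝ)+1)^(K+1) * ρ^n))
    (t := Metric.ball (0:ℝ) ρ) (y₀ := 0)
  · exact (aux_summable_pow (K+1) h0 h1).mul_left ρ⁻¹
  · exact Metric.isOpen_ball
  · exact (convex_ball (0:ℝ) ρ).isPreconnected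
  · intro n x _
    have h := (hasDerivAt_pow n ((x:ℝ):ℂ)).comp_ofReal
    exact h.const_mul (pochNewton n s)
  · intro n x hx
    have hxρ : |x| < ρ := by rwa [Metric.mem_ball, Real.dist_eq, sub_zero] at hx
    rw [norm_mul, norm_mul, norm_pow, Complex.norm_natCast, Complex.norm_real, Real.norm_eq_abs]
    match n with
    | 0 => simp; positivity
    | (m+1) =>
      have h1n := norm_pochNewton_le s K (Nat.le_ceil _) (m+1)
      have hcast : (((m+1:ℕ)):ℝ) = (m:ℝ)+1 := by push_cast; ring
      have h2 : |x|^(m+1-1) ≤ ρ^m := by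
        simpa using pow_le_pow_left₀ (abs_nonneg x) hxρ.le m
      calc ‖pochNewton (m+1) s‖ * ((((m+1:ℕ)):ℝ) * |x|^(m+1-1))
          ≤ (((m:ℝ)+1)+1)^K * ((((m:ℝ)+1)+1) * ρ^m) := by
            apply mul_le_mul (hcast ▸ h1n)
            · apply mul_le_mul (by rw [hcast]; linarith) h2 (by positivity) (by positivity)
            · positivity
            · positivity
        _ = (((m:ℝ)+1)+1)^(K+1) * ρ^m := by ring
        _ = ρ⁻¹ * ((((m+1:ℕ):ℝ)+1)^(K+1) * ρ^(m+1)) := by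
            rw [hcast]; field_simp; ring
  · exact Metric.mem_ball_self h0
  · apply summable_of_ne_finset_zero (s := {0})
    intro n hn
    have hn0 : n ≠ 0 := by simpa using hn
    simp [zero_pow hn0]
  · rwa [Metric.mem_ball, Real.dist_eq, sub_zero]

lemma deriv_identity (s : ℂ) {y : ℝ} (hy : |y| < 1) :
    (1 - ((y:ℝ):ℂ)) * (∑' n : ℕ, pochNewton n s * ((n:ℂ) * ((y:ℝ):ℂ)^(n-1)))
      = -s * ∑' n : ℕ, pochNewton n s * ((y:ℝ):ℂ)^n := by
  set z : ℂ := ((y:ℝ):ℂ) with hzdef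
  have hz : ‖z‖ < 1 := by rwa [hzdef, Complex.norm_real, Real.norm_eq_abs]
  have S0 := summable_poch_mul_pow s hz
  have S1 := summable_poch_mul_deriv s hz
  have Sn := summable_n_poch_mul_pow s hz
  set D := ∑' n : ℕ, pochNewton n s * ((n:ℂ) * z^(n-1)) with hD
  set F := ∑' n : ℕ, pochNewton n s * z^n with hF
  have e1 : D = ∑' n : ℕ, ((n:ℂ) - s) * (pochNewton n s * z^n) := by
    rw [hD, Summable.tsum_eq_zero_add S1]
    have ht0 : pochNewton 0 s * (((0:ℕ):ℂ) * z^(0-1)) = 0 := by simp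
    rw [ht0, zero_add]
    have hterm : ∀ n : ℕ, pochNewton (n+1) s * (((n+1:ℕ):ℂ) * z^(n+1-1))
        = ((n:ℂ) - s) * (pochNewton n s * z^n) - (-s) * 0 := by
      intro n
      have hrec := pochNewton_rec n s
      push_cast
      calc pochNewton (n+1) s * (((n:ℂ)+1) * z^n)
          = (pochNewton (n+1) s * ((n:ℂ)+1)) * z^n := by ring
        _ = (((n:ℂ) - s) * pochNewton n s) * z^n := by rw [hrec]
        _ = ((n:ℂ) - s) * (pochNewton n s * z^n) - (-s) * 0 := by ring
    calc (∑' n : ℕ, pochNewton (n+1) s * (((n+1:ℕ):ℂ) * z^(n+1-1)))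
        = ∑' n : ℕ, (((n:ℂ) - s) * (pochNewton n s * z^n) - (-s) * 0) := by
          apply tsum_congr; intro n; exact hterm n
      _ = ∑' n : ℕ, ((n:ℂ) - s) * (pochNewton n s * z^n) := by
          apply tsum_congr; intro n; ring_nf
  have e2 : ∑' n : ℕ, ((n:ℂ) - s) * (pochNewton n s * z^n)
      = (∑' n : ℕ, (n:ℂ) * (pochNewton n s * z^n)) - s * F := by
    rw [hF, ← tsum_mul_left (a := s), ← Summable.tsum_sub Sn (S0.mul_left s)]
    apply tsum_congr; intro n; ring
  have e3 : ∑' n : ℕ, (n:ℂ) * (pochNewton n s * z^n) = z * D := by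
    rw [hD, ← tsum_mul_left (a := z)]
    apply tsum_congr
    intro n
    match n with
    | 0 => simp
    | (m+1) =>
      simp only [Nat.add_sub_cancel]
      push_cast
      ring
  have hcomb : D = z * D - s * F := by
    calc D = ∑' n : ℕ, ((n:ℂ) - s) * (pochNewton n s * z^n) := e1
      _ = (∑' n : ℕ, (n:ℂ) * (pochNewton n s * z^n)) - s * F := e2
      _ = z * D - s * F := by rw [e3]
  linear_combination hcomb

lemma hasSum_pochNewton_mul_pow (s : ℂ) {x : ℝ} (hx0 : 0 ≤ x) (hx1 : x < 1) :
    HasSum (fun n : ℕ => pochNewton n s * ((x:ℝ):ℂ)^n)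
      (Complex.exp (s * ((Real.log (1-x) : ℝ) : ℂ))) := by
  set ρ := (x+1)/2 with hρ
  have hρ0 : 0 < ρ := by positivity
  have hρ1 : ρ < 1 := by rw [hρ]; linarith
  have hxρ : x < ρ := by rw [hρ]; linarith
  set F : ℝ → ℂ := fun t : ℝ => ∑' n : ℕ, pochNewton n s * ((t:ℝ):ℂ)^n with hFdef
  set H : ℝ → ℂ := fun t : ℝ => F t * Complex.exp (-s * ((Real.log (1-t) : ℝ):ℂ)) with hHdef
  have hderivAt : ∀ t ∈ Set.Icc (0:ℝ) x, HasDerivAt H 0 t := by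
    intro t ht
    have htρ : |t| < ρ := by
      rw [abs_lt]; exact ⟨by linarith [ht.1], by linarith [ht.2]⟩
    have ht1 : |t| < 1 := lt_trans htρ hρ1
    have h1t : (0:ℝ) < 1 - t := by
      have := (abs_lt.1 ht1).2; linarith
    have hF' := hasDerivAt_pochSeries s hρ0 hρ1 htρ
    set D := ∑' n : ℕ, pochNewton n s * ((n:ℂ) * ((t:ℝ):ℂ)^(n-1)) with hDdef
    have hL : HasDerivAt (fun u : ℝ => Real.log (1 - u)) (-(1-t)⁻¹) t := by
      have hinner : HasDerivAt (fun u : ℝ => 1 - u) (-1) t := by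
        simpa using (hasDerivAt_id t).const_sub 1
      have h := (Real.hasDerivAt_log (ne_of_gt h1t)).comp t hinner
      exact h.congr_deriv (by ring)
    have hLC : HasDerivAt (fun u : ℝ => ((Real.log (1-u) : ℝ):ℂ)) ((( -(1-t)⁻¹ : ℝ)):ℂ) t :=
      hL.ofReal_comp
    have hE : HasDerivAt (fun u : ℝ => Complex.exp (-s * ((Real.log (1-u) : ℝ):ℂ)))
        (Complex.exp (-s * ((Real.log (1-t) : ℝ):ℂ)) * (-s * ((-(1-t)⁻¹ : ℝ):ℂ))) t := by
      have h2 := hLC.const_mul (-s)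
      have h3 := h2.cexp
      simpa [mul_comm] using h3
    have hH' := hF'.mul hE
    have hzero : D * Complex.exp (-s * ((Real.log (1-t) : ℝ):ℂ))
        + F t * (Complex.exp (-s * ((Real.log (1-t) : ℝ):ℂ)) * (-s * ((-(1-t)⁻¹ : ℝ):ℂ))) = 0 := by
      have hid := deriv_identity s ht1
      have h1z : (1:ℂ) - ((t:ℝ):ℂ) ≠ 0 := by
        have : ((1 - t : ℝ) : ℂ) ≠ 0 := by
          exact_mod_cast ne_of_gt h1t
        push_cast at this ⊢
        convert this using 1
      have hDeq : D = (-s * F t) / (1 - ((t:ℝ):ℂ)) := by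
        rw [eq_div_iff h1z]
        rw [hDdef, hFdef]
        linear_combination hid
      rw [hDeq]
      have hcast : ((-(1-t)⁻¹ : ℝ):ℂ) = -(1 - ((t:ℝ):ℂ))⁻¹ := by push_cast; ring
      rw [hcast]
      field_simp
      ring
    have : HasDerivAt H (D * Complex.exp (-s * ((Real.log (1-t) : ℝ):ℂ))
        + F t * (Complex.exp (-s * ((Real.log (1-t) : ℝ):ℂ)) * (-s * ((-(1-t)⁻¹ : ℝ):ℂ)))) t := hH'
    rwa [hzero] at this
  have hconst := constant_of_has_deriv_right_zero
    (fun t ht => (hderivAt t ht).continuousAt.continuousWithinAt)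
    (fun t ht => (hderivAt t (Set.mem_Icc_of_Ico ht)).hasDerivWithinAt)
  have hx_mem : x ∈ Set.Icc (0:ℝ) x := Set.right_mem_Icc.2 hx0
  have hH0 : H 0 = 1 := by
    rw [hHdef]
    simp only
    have hF0 : F 0 = 1 := by
      rw [hFdef]
      simp only
      rw [tsum_eq_single 0]
      · simp [pochNewton_zero]
      · intro n hn
        simp [zero_pow hn]
    rw [hF0]
    norm_num
  have hHx := hconst x hx_mem
  rw [hH0] at hHx
  -- H x = 1 : F x * exp(-s * L) = 1
  have hFx : F x = Complex.exp (s * ((Real.log (1-x) : ℝ):ℂ)) := by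
    have hexp : Complex.exp (-s * ((Real.log (1-x) : ℝ):ℂ))
        = (Complex.exp (s * ((Real.log (1-x) : ℝ):ℂ)))⁻¹ := by
      rw [← Complex.exp_neg]; congr 1; ring
    rw [hHdef] at hHx
    simp only at hHx
    rw [hexp] at hHx
    have hne : Complex.exp (s * ((Real.log (1-x) : ℝ):ℂ)) ≠ 0 := Complex.exp_ne_zero _
    field_simp at hHx
    exact hHx
  have hxnorm : ‖((x:ℝ):ℂ)‖ < 1 := by
    rw [Complex.norm_real, Real.norm_eq_abs, abs_of_nonneg hx0]; exact hx1
  have hsumm := summable_poch_mul_pow s hxnorm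
  have := hsumm.hasSum
  rwa [show ∑' n : ℕ, pochNewton n s * ((x:ℝ):ℂ)^n = F x from rfl, hFx] at this

lemma cpow_neg_eq_exp {a : ℝ} (ha : 0 < a) (s : ℂ) :
    ((a:ℝ):ℂ)^(-s) = Complex.exp (-s * ((Real.log a : ℝ):ℂ)) := by
  rw [Complex.cpow_def_of_ne_zero (by exact_mod_cast ne_of_gt ha), ← Complex.ofReal_log ha.le]
  congr 1; ring

lemma hasSum_poch_inv (s : ℂ) {m : ℕ} (hm : 1 ≤ m) :
    HasSum (fun n : ℕ => pochNewton n s * (((1 - 1/(m:ℝ)) : ℝ):ℂ)^n) (((m:ℕ):ℂ)^(-s)) := by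
  have hm0 : (0:ℝ) < m := by exact_mod_cast hm
  have hm1 : 1/(m:ℝ) ≤ 1 := by
    rw [div_le_one hm0]; exact_mod_cast hm
  have hx0 : 0 ≤ 1 - 1/(m:ℝ) := by linarith
  have hx1 : 1 - 1/(m:ℝ) < 1 := by
    have : 0 < 1/(m:ℝ) := by positivity
    linarith
  have h := hasSum_pochNewton_mul_pow s hx0 hx1
  have h1x : 1 - (1 - 1/(m:ℝ)) = 1/(m:ℝ) := by ring
  rw [h1x] at h
  have hlog : Real.log (1/(m:ℝ)) = -Real.log (m:ℝ) := by rw [one_div, Real.log_inv]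
  rw [hlog] at h
  have hcast : ((m:ℕ):ℂ) = (((m:ℝ)):ℂ) := by push_cast; rfl
  have htarget : ((m:ℕ):ℂ)^(-s) = Complex.exp (-s * ((Real.log (m:ℝ) : ℝ):ℂ)) := by
    rw [hcast]; exact cpow_neg_eq_exp hm0 s
  rw [htarget]
  convert h using 2
  push_cast
  ring

noncomputable def etaTerm (s : ℂ) (j : ℕ) : ℂ :=
  Complex.exp (-s * ((Real.log (2*(j:ℝ)+1) : ℝ):ℂ))
    - Complex.exp (-s * ((Real.log (2*(j:ℝ)+2) : ℝ):ℂ))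

noncomputable def etaSum (s : ℂ) : ℂ := ∑' j : ℕ, etaTerm s j

lemma etaTerm_eq_cpow (s : ℂ) (j : ℕ) :
    etaTerm s j = ((2*(j:ℝ)+1 :ℝ):ℂ)^(-s) - ((2*(j:ℝ)+2:ℝ):ℂ)^(-s) := by
  rw [cpow_neg_eq_exp (by positivity), cpow_neg_eq_exp (by positivity)]
  rfl

lemma norm_etaTerm_le {σ₀ R : ℝ} (hσ₀ : 0 ≤ σ₀) {s : ℂ} (hσ : σ₀ ≤ s.re) (hR : ‖s‖ ≤ R) (j : ℕ) :
    ‖etaTerm s j‖ ≤ ((2+Real.exp R)*(R+1)) * (((j:ℝ)+1)^(-(1+σ₀))) := by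
  have hR0 : 0 ≤ R := le_trans (norm_nonneg s) hR
  set a : ℝ := 2*(j:ℝ)+1 with hadef
  set b : ℝ := 2*(j:ℝ)+2 with hbdef
  have ha0 : (0:ℝ) < a := by positivity
  have ha1 : (1:ℝ) ≤ a := by rw [hadef]; linarith [Nat.cast_nonneg (α := ℝ) j]
  have hab : a ≤ b := by rw [hadef, hbdef]; linarith
  set La : ℝ := Real.log a with hLa
  set Lb : ℝ := Real.log b with hLb
  set d : ℝ := Lb - La with hd
  have hLa0 : 0 ≤ La := Real.log_nonneg ha1
  have hd0 : 0 ≤ d := by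
    rw [hd]
    have := Real.log_le_log ha0 hab
    linarith
  have hda : d ≤ 1/a := by
    rw [hd, hLa, hLb, ← Real.log_div (by positivity) (ne_of_gt ha0)]
    have h1 := Real.log_le_sub_one_of_pos (x := b/a) (by positivity)
    have h2 : b/a - 1 = 1/a := by
      rw [hbdef, hadef]; field_simp; ring
    linarith
  have hd1 : d ≤ 1 := by
    have : 1/a ≤ 1 := by
      rw [div_le_one ha0]; exact ha1
    linarith
  have hfact : etaTerm s j = Complex.exp (-s*((La:ℝ):ℂ)) * (1 - Complex.exp (-s*((d:ℝ):ℂ))) := by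
    rw [mul_sub, mul_one, ← Complex.exp_add]
    unfold etaTerm
    congr 2
    rw [hd]
    push_cast
    ring
  rw [hfact, norm_mul]
  have h1 : ‖Complex.exp (-s*((La:ℝ):ℂ))‖ ≤ a^(-σ₀) := by
    rw [Complex.norm_exp, Real.rpow_def_of_pos ha0]
    apply Real.exp_le_exp.2
    have hre : (-s * ((La:ℝ):ℂ)).re = -s.re * La := by
      simp [Complex.mul_re]
    rw [hre]
    nlinarith [mul_le_mul_of_nonneg_right hσ hLa0]
  have h2 : ‖1 - Complex.exp (-s*((d:ℝ):ℂ))‖ ≤ ((2+Real.exp R)*(R+1)) * (1/a) := by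
    have hw : ‖-s*((d:ℝ):ℂ)‖ = ‖s‖*d := by
      rw [norm_mul, norm_neg, Complex.norm_real, Real.norm_of_nonneg hd0]
    by_cases hc : ‖s‖ * d ≤ 1
    · have habs := Complex.norm_exp_sub_one_le (x := -s*((d:ℝ):ℂ))
        (by rw [hw]; exact hc)
      rw [← norm_neg, neg_sub]
      calc ‖Complex.exp (-s*((d:ℝ):ℂ)) - 1‖ ≤ 2 * ‖-s*((d:ℝ):ℂ)‖ := by
            simpa using habs
        _ = 2 * (‖s‖ * d) := by rw [hw]
        _ ≤ 2 * (R * (1/a)) := by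
            apply mul_le_mul_of_nonneg_left _ (by norm_num)
            apply mul_le_mul hR hda hd0 hR0
        _ ≤ ((2+Real.exp R)*(R+1)) * (1/a) := by
            have h1a : (0:ℝ) ≤ 1/a := by positivity
            have key : 2*R ≤ (2+Real.exp R)*(R+1) := by nlinarith [Real.exp_pos R]
            calc 2*(R*(1/a)) = (2*R)*(1/a) := by ring
              _ ≤ ((2+Real.exp R)*(R+1)) * (1/a) := mul_le_mul_of_nonneg_right key h1a
    · push_neg at hc
      have hcr : 1 ≤ R * (1/a) := by
        have hsd : ‖s‖ * d ≤ ‖s‖ * (1/a) := mul_le_mul_of_nonneg_left hda (norm_nonneg s)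
        have h2' : ‖s‖ * (1/a) ≤ R * (1/a) := mul_le_mul_of_nonneg_right hR (by positivity)
        nlinarith
      have hb1 : ‖1 - Complex.exp (-s*((d:ℝ):ℂ))‖ ≤ 1 + Real.exp R := by
        calc ‖1 - Complex.exp (-s*((d:ℝ):ℂ))‖ ≤ ‖(1:ℂ)‖ + ‖Complex.exp (-s*((d:ℝ):ℂ))‖ :=
              norm_sub_le _ _
          _ ≤ 1 + Real.exp R := by
              rw [norm_one, Complex.norm_exp]
              have hre : (-s * ((d:ℝ):ℂ)).re = -s.re * d := by simp [Complex.mul_re]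
              rw [hre]
              have : -s.re * d ≤ R := by
                have h1' : -s.re ≤ |s.re| := by
                  rcases abs_cases s.re with ⟨h, _⟩ | ⟨h, _⟩ <;> linarith
                have h2' : |s.re| ≤ ‖s‖ := Complex.abs_re_le_norm s
                have h3' : -s.re * d ≤ ‖s‖ * d := by nlinarith [norm_nonneg s]
                have h4' : ‖s‖ * d ≤ ‖s‖ * 1 := mul_le_mul_of_nonneg_left hd1 (norm_nonneg s)
                linarith
              exact add_le_add le_rfl (Real.exp_le_exp.2 this)
      calc ‖1 - Complex.exp (-s*((d:ℝ):ℂ))‖ ≤ 1 + Real.exp R := hb1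
        _ ≤ (1 + Real.exp R) * (R * (1/a)) := by
            nlinarith [Real.exp_pos R]
        _ ≤ ((2+Real.exp R)*(R+1)) * (1/a) := by
            have h1a : 0 ≤ 1/a := by positivity
            nlinarith [Real.exp_pos R]
  calc ‖Complex.exp (-s*((La:ℝ):ℂ))‖ * ‖1 - Complex.exp (-s*((d:ℝ):ℂ))‖
      ≤ a^(-σ₀) * (((2+Real.exp R)*(R+1)) * (1/a)) := by
        apply mul_le_mul h1 h2 (norm_nonneg _) (by positivity)
    _ = ((2+Real.exp R)*(R+1)) * (a^(-σ₀) * a^((-1 : ℝ))) := by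
        rw [Real.rpow_neg_one]
        field_simp
    _ = ((2+Real.exp R)*(R+1)) * a^(-(1+σ₀)) := by
        rw [← Real.rpow_add ha0]
        ring_nf
    _ ≤ ((2+Real.exp R)*(R+1)) * (((j:ℝ)+1)^(-(1+σ₀))) := by
        apply mul_le_mul_of_nonneg_left _ (by positivity)
        apply Real.rpow_le_rpow_of_nonpos (by positivity) (by rw [hadef]; linarith)
          (by linarith)

lemma summable_aux_rpow {σ₀ : ℝ} (hσ₀ : 0 < σ₀) :
    Summable (fun j : ℕ => ((j:ℝ)+1)^(-(1+σ₀))) := by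
  have h : Summable (fun n : ℕ => ((n:ℝ)) ^ (-(1+σ₀))) := by
    rw [Real.summable_nat_rpow]; linarith
  have h2 := (summable_nat_add_iff 1).2 h
  exact h2.congr (fun n => by push_cast; ring_nf)

lemma summable_etaTerm {s : ℂ} (hs : 0 < s.re) : Summable (fun j : ℕ => etaTerm s j) := by
  apply Summable.of_norm
  apply Summable.of_nonneg_of_le (fun j => norm_nonneg _)
    (fun j => norm_etaTerm_le hs.le le_rfl le_rfl j)
  exact (summable_aux_rpow hs).mul_left _

lemma differentiableAt_etaSum {s₀ : ℂ} (hs : 0 < s₀.re) : DifferentiableAt ℂ etaSum s₀ := by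
  set ε : ℝ := s₀.re/2 with hε
  have hε0 : 0 < ε := by positivity
  set R : ℝ := ‖s₀‖ + ε with hR
  have key : DifferentiableOn ℂ (fun s => ∑' j : ℕ, etaTerm s j) (Metric.ball s₀ ε) := by
    apply Complex.differentiableOn_tsum_of_summable_norm
      (u := fun j : ℕ => ((2+Real.exp R)*(R+1)) * (((j:ℝ)+1)^(-(1+ε))))
    · exact (summable_aux_rpow hε0).mul_left _
    · intro j
      apply Differentiable.differentiableOn
      apply Differentiable.sub <;>
        exact (differentiable_id.neg.mul_const _).cexp
    · exact Metric.isOpen_ball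
    · intro j w hw
      rw [Metric.mem_ball, Complex.dist_eq] at hw
      have habs := Complex.abs_re_le_norm (w - s₀)
      have hreabs : |w.re - s₀.re| < ε := by
        rw [← Complex.sub_re]
        calc |(w - s₀).re| ≤ ‖w - s₀‖ := Complex.abs_re_le_norm _
          _ < ε := hw
      have hw_re : ε ≤ w.re := by
        have := (abs_lt.1 hreabs).1
        rw [hε] at *
        linarith
      have hw_norm : ‖w‖ ≤ R := by
        calc ‖w‖ = ‖s₀ + (w - s₀)‖ := by ring_nf
          _ ≤ ‖s₀‖ + ‖w - s₀‖ := norm_add_le _ _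
          _ ≤ ‖s₀‖ + ε := by
              exact add_le_add le_rfl hw.le
      exact norm_etaTerm_le hε0.le hw_re hw_norm j
  exact key.differentiableAt (Metric.ball_mem_nhds s₀ hε0)

lemma preconnected_strip : IsPreconnected {s : ℂ | 0 < s.re ∧ s ≠ 1} := by
  set V1 : Set ℂ := {s : ℂ | 0 < s.re} ∩ {s : ℂ | s.re < 1} with hV1def
  set V2 : Set ℂ := {s : ℂ | 1 < s.re} with hV2def
  set Vp : Set ℂ := {s : ℂ | 0 < s.re} ∩ {s : ℂ | 0 < s.im} with hVpdef
  set Vm : Set ℂ := {s : ℂ | 0 < s.re} ∩ {s : ℂ | s.im < 0} with hVmdef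
  have pV1 : IsPreconnected V1 :=
    ((convex_halfSpace_re_gt 0).inter (convex_halfSpace_re_lt 1)).isPreconnected
  have pV2 : IsPreconnected V2 := (convex_halfSpace_re_gt 1).isPreconnected
  have pVp : IsPreconnected Vp :=
    ((convex_halfSpace_re_gt 0).inter (convex_halfSpace_im_gt 0)).isPreconnected
  have pVm : IsPreconnected Vm :=
    ((convex_halfSpace_re_gt 0).inter (convex_halfSpace_im_lt 0)).isPreconnected
  have hz1 : (Complex.I + (1:ℂ)/2) ∈ V1 ∩ Vp := by
    constructor <;> constructor <;> simp <;> norm_num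
  have hz2 : (-Complex.I + (1:ℂ)/2) ∈ (V1 ∪ Vp) ∩ Vm := by
    constructor
    · left; constructor <;> simp <;> norm_num
    · constructor <;> simp <;> norm_num
  have hz3 : (Complex.I + 2) ∈ ((V1 ∪ Vp) ∪ Vm) ∩ V2 := by
    constructor
    · left; right; constructor <;> simp
    · simp [hV2def]
  have p12 : IsPreconnected (V1 ∪ Vp) :=
    IsPreconnected.union _ hz1.1 hz1.2 pV1 pVp
  have p123 : IsPreconnected ((V1 ∪ Vp) ∪ Vm) :=
    IsPreconnected.union _ hz2.1 hz2.2 p12 pVm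
  have pall : IsPreconnected (((V1 ∪ Vp) ∪ Vm) ∪ V2) :=
    IsPreconnected.union _ hz3.1 hz3.2 p123 pV2
  have hU : {s : ℂ | 0 < s.re ∧ s ≠ 1} = ((V1 ∪ Vp) ∪ Vm) ∪ V2 := by
    ext z
    simp only [Set.mem_setOf_eq, Set.mem_union, Set.mem_inter_iff, hV1def, hV2def, hVpdef, hVmdef]
    constructor
    · rintro ⟨hre, hne⟩
      rcases lt_trichotomy z.re 1 with h | h | h
      · exact Or.inl (Or.inl (Or.inl ⟨hre, h⟩))
      · rcases lt_trichotomy z.im 0 with h' | h' | h'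
        · exact Or.inl (Or.inr ⟨hre, h'⟩)
        · exfalso
          apply hne
          apply Complex.ext <;> simp [h, h']
        · exact Or.inl (Or.inl (Or.inr ⟨hre, h'⟩))
      · exact Or.inr h
    · rintro (((⟨h1, h2⟩ | ⟨h1, h2⟩) | ⟨h1, h2⟩) | h)
      · exact ⟨h1, fun he => by rw [he] at h2; simp at h2⟩
      · exact ⟨h1, fun he => by rw [he] at h2; simp at h2⟩
      · exact ⟨h1, fun he => by rw [he] at h2; simp at h2⟩
      · refine ⟨by linarith, fun he => by rw [he] at h; simp at h⟩
  rw [hU]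
  exact pall

lemma zeta_rel_etaSum {s : ℂ} (hs : 1 < s.re) :
    (1 - (2:ℂ)^((1:ℂ)-s)) * riemannZeta s = etaSum s := by
  have hz := zeta_eq_tsum_one_div_nat_add_one_cpow hs
  set f : ℕ → ℂ := fun n => 1 / ((n:ℂ)+1)^s with hf
  have hsum : Summable f := by
    have h := Complex.summable_one_div_nat_cpow.2 hs
    have h2 := (summable_nat_add_iff 1).2 h
    apply h2.congr
    intro n
    rw [hf]
    push_cast
    rfl
  have hodd : Summable (fun k : ℕ => f (2*k)) :=
    hsum.comp_injective (fun a b h => by omega)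
  have heven : Summable (fun k : ℕ => f (2*k+1)) :=
    hsum.comp_injective (fun a b h => by omega)
  have hsplit := tsum_even_add_odd hodd heven
  set O : ℂ := ∑' k : ℕ, f (2*k) with hO
  set E : ℂ := ∑' k : ℕ, f (2*k+1) with hE
  have hterm2 : ∀ n : ℕ, (2:ℂ)^(-s) * f n = f (2*n+1) := by
    intro n
    rw [hf]
    simp only
    have hcast1 : ((n:ℂ)+1) = (((n:ℝ)+1 : ℝ):ℂ) := by push_cast; ring
    have hcast2 : (((2*n+1 : ℕ):ℂ)+1) = ((2:ℝ):ℂ) * (((n:ℝ)+1 : ℝ):ℂ) := by push_cast; ring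
    have hcast3 : (2:ℂ) = ((2:ℝ):ℂ) := by norm_num
    rw [hcast1, hcast2, hcast3, Complex.mul_cpow_ofReal_nonneg (by norm_num) (by positivity)]
    rw [Complex.cpow_neg, one_div, one_div, ← mul_inv]
  have hpow : (2:ℂ)^((1:ℂ)-s) * riemannZeta s = 2 * E := by
    have h21 : (2:ℂ)^((1:ℂ)-s) = 2 * (2:ℂ)^(-s) := by
      rw [sub_eq_add_neg, Complex.cpow_add _ _ (two_ne_zero), Complex.cpow_one]
    rw [h21, hz, mul_assoc]
    congr 1
    rw [← tsum_mul_left, hE]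
    exact tsum_congr hterm2
  have heta : etaSum s = O - E := by
    unfold etaSum
    rw [hO, hE, ← Summable.tsum_sub hodd heven]
    apply tsum_congr
    intro j
    rw [etaTerm_eq_cpow, hf]
    simp only
    have hc1 : ((2*(j:ℝ)+1 : ℝ):ℂ) = (((2*j : ℕ):ℂ)+1) := by push_cast; ring
    have hc2 : ((2*(j:ℝ)+2 : ℝ):ℂ) = (((2*j+1 : ℕ):ℂ)+1) := by push_cast; ring
    rw [hc1, hc2, Complex.cpow_neg, Complex.cpow_neg, one_div, one_div]
  have hzeta : riemannZeta s = O + E := by rw [hz, ← hsplit]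
  rw [sub_mul, one_mul, hpow, hzeta, heta]
  ring

lemma etaSum_one : etaSum 1 = ((Real.log 2 : ℝ) : ℂ) := by
  set t : ℕ → ℝ := fun j => (2*(j:ℝ)+1)⁻¹ - (2*(j:ℝ)+2)⁻¹ with ht
  have hterm : ∀ j : ℕ, etaTerm 1 j = ((t j : ℝ) : ℂ) := by
    intro j
    unfold etaTerm
    have e1 : Complex.exp (-(1:ℂ) * ((Real.log (2*(j:ℝ)+1) : ℝ):ℂ))
        = (((2*(j:ℝ)+1)⁻¹ : ℝ) : ℂ) := by
      rw [show -(1:ℂ) * ((Real.log (2*(j:ℝ)+1) : ℝ):ℂ) = ((-(Real.log (2*(j:ℝ)+1)) : ℝ) : ℂ)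
        by push_cast; ring, ← Complex.ofReal_exp, Real.exp_neg, Real.exp_log (by positivity)]
    have e2 : Complex.exp (-(1:ℂ) * ((Real.log (2*(j:ℝ)+2) : ℝ):ℂ))
        = (((2*(j:ℝ)+2)⁻¹ : ℝ) : ℂ) := by
      rw [show -(1:ℂ) * ((Real.log (2*(j:ℝ)+2) : ℝ):ℂ) = ((-(Real.log (2*(j:ℝ)+2)) : ℝ) : ℂ)
        by push_cast; ring, ← Complex.ofReal_exp, Real.exp_neg, Real.exp_log (by positivity)]
    rw [e1, e2, ht, ← Complex.ofReal_sub]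
  have hsumt : Summable t := by
    apply Summable.of_nonneg_of_le _ _ (summable_aux_rpow (σ₀ := 1) one_pos)
    · intro j
      rw [ht]
      simp only
      have h1 : (2*(j:ℝ)+1)⁻¹ ≥ (2*(j:ℝ)+2)⁻¹ := by
        apply inv_anti₀ (by positivity) (by linarith)
      linarith
    · intro j
      have hrw : ((j:ℝ)+1)^(-(1+1):ℝ) = (((j:ℝ)+1)*((j:ℝ)+1))⁻¹ := by
        rw [show (-(1+1):ℝ) = -((2:ℕ):ℝ) by norm_num, Real.rpow_neg (by positivity),
          Real.rpow_natCast, pow_two]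
      rw [hrw, ht]
      simp only
      have heq : (2*(j:ℝ)+1)⁻¹ - (2*(j:ℝ)+2)⁻¹ = ((2*(j:ℝ)+1)*(2*(j:ℝ)+2))⁻¹ := by
        rw [inv_sub_inv (by positivity) (by positivity)]
        norm_num
      rw [heq]
      apply inv_anti₀ (by positivity)
      nlinarith [Nat.cast_nonneg (α := ℝ) j]
  have hpart : ∀ N : ℕ, ∑ j ∈ range N, t j
      = ((harmonic (2*N) : ℚ):ℝ) - ((harmonic N : ℚ):ℝ) := by
    intro N
    induction N with
    | zero => simp [harmonic]
    | succ N ih =>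
      rw [Finset.sum_range_succ, ih]
      have h2 : 2*(N+1) = (2*N+1)+1 := by ring
      rw [h2, harmonic_succ, harmonic_succ, harmonic_succ]
      push_cast
      rw [ht]
      simp only
      have hd1 : ((N:ℝ)+1) ≠ 0 := by positivity
      have hd2 : (2+(N:ℝ)*2) ≠ 0 := by positivity
      have hd3 : (1+(N:ℝ)*2) ≠ 0 := by positivity
      field_simp
      ring
  have h2n : Tendsto (fun N : ℕ => 2*N) atTop atTop :=
    Filter.tendsto_atTop_mono (fun n => by simp only [id_eq]; omega) tendsto_id
  have hγ := Real.tendsto_harmonic_sub_log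
  have hγ2 := hγ.comp h2n
  have hsub := hγ2.sub hγ
  rw [sub_self] at hsub
  have hlim : Tendsto (fun N : ℕ => ((harmonic (2*N) : ℚ):ℝ) - ((harmonic N : ℚ):ℝ))
      atTop (𝓝 (Real.log 2)) := by
    have hcongr : ∀ᶠ N : ℕ in atTop,
        (((harmonic (2*N) : ℚ):ℝ) - Real.log (((2*N : ℕ):ℝ))) - (((harmonic N : ℚ):ℝ) - Real.log N)
          = (((harmonic (2*N) : ℚ):ℝ) - ((harmonic N : ℚ):ℝ)) - Real.log 2 := by
      filter_upwards [Filter.eventually_ge_atTop 1] with N hN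
      have hN0 : (0:ℝ) < N := by exact_mod_cast hN
      have : Real.log ((2*N : ℕ):ℝ) = Real.log 2 + Real.log N := by
        push_cast
        rw [Real.log_mul (by norm_num) (ne_of_gt hN0)]
      rw [this]
      ring
    have h0 : Tendsto (fun N : ℕ => (((harmonic (2*N) : ℚ):ℝ) - ((harmonic N : ℚ):ℝ)) - Real.log 2)
        atTop (𝓝 0) := Filter.Tendsto.congr' hcongr hsub
    have h1 := h0.add_const (Real.log 2)
    simpa using h1
  have hhs : HasSum t (Real.log 2) := by
    have h := hsumt.hasSum
    have h2 := h.tendsto_sum_nat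
    have heq2 : tsum t = Real.log 2 := by
      apply tendsto_nhds_unique (h2.congr (fun N => (hpart N))) hlim
    rwa [heq2] at h
  unfold etaSum
  rw [show (∑' j : ℕ, etaTerm 1 j) = ∑' j : ℕ, ((t j : ℝ):ℂ) from tsum_congr hterm]
  exact (Complex.hasSum_ofReal.2 hhs).tsum_eq

lemma eta_eq_etaSum {s : ℂ} (hs : 0 < s.re) : dirichletEta s = etaSum s := by
  by_cases h1 : s = 1
  · subst h1
    rw [dirichletEta, if_pos rfl, etaSum_one]
  · rw [dirichletEta, if_neg h1]
    set U : Set ℂ := {z : ℂ | 0 < z.re ∧ z ≠ 1} with hUdef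
    have hopen : IsOpen U := by
      have : U = (Complex.re ⁻¹' Set.Ioi 0) ∩ {(1:ℂ)}ᶜ := by
        ext z
        simp [hUdef, Set.mem_setOf_eq]
      rw [this]
      exact (isOpen_Ioi.preimage Complex.continuous_re).inter isOpen_compl_singleton
    have hdf : DifferentiableOn ℂ (fun z => (1 - (2:ℂ)^((1:ℂ)-z)) * riemannZeta z) U := by
      intro z hz
      apply DifferentiableAt.differentiableWithinAt
      apply DifferentiableAt.mul
      · apply DifferentiableAt.const_sub
        apply DifferentiableAt.const_cpow
        · exact (differentiableAt_const 1).sub differentiableAt_id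
        · exact Or.inl two_ne_zero
      · exact differentiableAt_riemannZeta hz.2
    have hdg : DifferentiableOn ℂ etaSum U :=
      fun z hz => (differentiableAt_etaSum hz.1).differentiableWithinAt
    have h2U : (2:ℂ) ∈ U := by
      rw [hUdef]
      constructor
      · norm_num
      · intro h
        have := congrArg Complex.re h
        norm_num at this
    have heqev : (fun z => (1 - (2:ℂ)^((1:ℂ)-z)) * riemannZeta z) =ᶠ[𝓝 (2:ℂ)] etaSum := by
      apply Filter.eventuallyEq_of_mem (s := {z : ℂ | 1 < z.re})
      · apply (isOpen_lt continuous_const Complex.continuous_re).mem_nhds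
        norm_num
      · intro z hz
        exact zeta_rel_etaSum hz
    have heq := (hdf.analyticOnNhd hopen).eqOn_of_preconnected_of_eventuallyEq
      (hdg.analyticOnNhd hopen) preconnected_strip h2U heqev
    exact heq ⟨hs, h1⟩

lemma prod_range_natCast_sub {n k : ℕ} (hk : k ≤ n) :
    ∏ m ∈ range k, ((n:ℂ) - (m:ℂ)) = (n.descFactorial k : ℂ) := by
  induction k with
  | zero => simp
  | succ k ih =>
    have hk' : k ≤ n := by omega
    rw [Finset.prod_range_succ, ih hk', Nat.descFactorial_succ]
    have hc : ((n - k : ℕ) : ℂ) = (n:ℂ) - (k:ℂ) := by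
      have := Nat.cast_sub (R := ℂ) hk'
      exact this
    rw [Nat.cast_mul, hc]
    ring

lemma pochNewton_nat_eq {n k : ℕ} (hk : k ≤ n) :
    pochNewton k ((n:ℕ):ℂ) = (-1:ℂ)^k * (n.choose k : ℂ) := by
  unfold pochNewton
  rw [prod_range_natCast_sub hk]
  have hdesc : (n.descFactorial k : ℂ) = (k.factorial : ℂ) * (n.choose k : ℂ) := by
    rw [← Nat.cast_mul]
    exact_mod_cast congrArg (Nat.cast (R := ℂ)) (Nat.descFactorial_eq_factorial_mul_choose n k)
  rw [hdesc]
  have hkf : ((k.factorial : ℕ) : ℂ) ≠ 0 := by exact_mod_cast k.factorial_ne_zero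
  field_simp

lemma sum_pochNewton_nat_mul_pow (n : ℕ) (x : ℂ) :
    ∑ k ∈ range (n+1), pochNewton k ((n:ℕ):ℂ) * x^k = (1 - x)^n := by
  have h : (1 - x)^n = ((-x) + 1)^n := by ring
  rw [h, add_pow]
  apply Finset.sum_congr rfl
  intro k hk
  have hkn : k ≤ n := Nat.lt_succ_iff.1 (Finset.mem_range.1 hk)
  rw [pochNewton_nat_eq hkn, neg_pow, one_pow]
  ring

lemma dirichletEta_zero_val : dirichletEta 0 = 1/2 := by
  rw [dirichletEta, if_neg (by norm_num), riemannZeta_zero, sub_zero, Complex.cpow_one]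
  norm_num

noncomputable def rA (j : ℕ) : ℂ := (((1 - 1/(2*(j:ℝ)+1)) : ℝ):ℂ)
noncomputable def rB (j : ℕ) : ℂ := (((1 - 1/(2*(j:ℝ)+2)) : ℝ):ℂ)

lemma etaTerm_nat (K : ℕ) (j : ℕ) :
    etaTerm ((K:ℕ):ℂ) j
      = (((2*(j:ℝ)+1)⁻¹ :ℝ):ℂ)^K - (((2*(j:ℝ)+2)⁻¹ :ℝ):ℂ)^K := by
  unfold etaTerm
  have e : ∀ a : ℝ, 0 < a →
      Complex.exp (-((K:ℕ):ℂ) * ((Real.log a : ℝ):ℂ)) = (((a⁻¹ : ℝ)):ℂ)^K := by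
    intro a ha
    rw [show -((K:ℕ):ℂ) * ((Real.log a : ℝ):ℂ) = ((K:ℕ):ℂ) * ((-Real.log a : ℝ):ℂ)
      by push_cast; ring]
    rw [Complex.exp_nat_mul, ← Complex.ofReal_exp, Real.exp_neg, Real.exp_log ha]
  rw [e _ (by positivity), e _ (by positivity)]

lemma hfin_binom (n : ℕ) (y : ℂ) :
    ∑ k ∈ range n, pochNewton (k+1) ((n:ℕ):ℂ) * y^(k+1) = (1 - y)^n - 1 := by
  have h := sum_pochNewton_nat_mul_pow n y
  rw [Finset.sum_range_succ'] at h
  rw [pochNewton_zero] at h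
  simp only [pow_zero, one_mul, mul_one] at h
  linear_combination h

lemma coeff_eq (n : ℕ) :
    ∑ k ∈ range (n+1), pochNewton k ((n:ℕ):ℂ) * dirichletEta ((k:ℕ):ℂ)
      = 1/2 + ∑' j : ℕ, (rA j ^ n - rB j ^ n) := by
  rw [Finset.sum_range_succ']
  have h0 : pochNewton 0 ((n:ℕ):ℂ) * dirichletEta ((0:ℕ):ℂ) = 1/2 := by
    rw [pochNewton_zero, Nat.cast_zero, dirichletEta_zero_val]
    ring
  rw [h0]
  have hre : ∀ k : ℕ, (0:ℝ) < (((k+1:ℕ):ℂ)).re := by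
    intro k
    rw [Complex.natCast_re]
    positivity
  have hη : ∀ k : ℕ, dirichletEta (((k+1:ℕ)):ℂ) = ∑' j : ℕ, etaTerm (((k+1:ℕ)):ℂ) j :=
    fun k => eta_eq_etaSum (hre k)
  have hmain : ∑ k ∈ range n, pochNewton (k+1) ((n:ℕ):ℂ) * dirichletEta (((k+1:ℕ)):ℂ)
      = ∑' j : ℕ, (rA j ^ n - rB j ^ n) := by
    calc ∑ k ∈ range n, pochNewton (k+1) ((n:ℕ):ℂ) * dirichletEta (((k+1:ℕ)):ℂ)
        = ∑ k ∈ range n, ∑' j : ℕ, pochNewton (k+1) ((n:ℕ):ℂ) * etaTerm (((k+1:ℕ)):ℂ) j := by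
          apply Finset.sum_congr rfl
          intro k _
          rw [hη k, ← tsum_mul_left]
      _ = ∑' j : ℕ, ∑ k ∈ range n, pochNewton (k+1) ((n:ℕ):ℂ) * etaTerm (((k+1:ℕ)):ℂ) j := by
          rw [← Summable.tsum_finsetSum]
          intro k _
          exact (summable_etaTerm (hre k)).mul_left _
      _ = ∑' j : ℕ, (rA j ^ n - rB j ^ n) := by
          apply tsum_congr
          intro j
          have hterm : ∀ k : ℕ, pochNewton (k+1) ((n:ℕ):ℂ) * etaTerm (((k+1:ℕ)):ℂ) j
              = pochNewton (k+1) ((n:ℕ):ℂ) * ((((2*(j:ℝ)+1)⁻¹ :ℝ):ℂ))^(k+1)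
                - pochNewton (k+1) ((n:ℕ):ℂ) * ((((2*(j:ℝ)+2)⁻¹ :ℝ):ℂ))^(k+1) := by
            intro k
            rw [etaTerm_nat (k+1) j]
            ring
          rw [Finset.sum_congr rfl (fun k _ => hterm k), Finset.sum_sub_distrib,
            hfin_binom, hfin_binom]
          have hA : 1 - (((2*(j:ℝ)+1)⁻¹ :ℝ):ℂ) = rA j := by
            unfold rA; push_cast; ring
          have hB : 1 - (((2*(j:ℝ)+2)⁻¹ :ℝ):ℂ) = rB j := by
            unfold rB; push_cast; ring
          rw [hA, hB]
          ring
  rw [hmain]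
  ring

lemma sAB_facts (j : ℕ) : 0 ≤ 1 - 1/(2*(j:ℝ)+1) ∧
    (1 - 1/(2*(j:ℝ)+1)) ≤ (1 - 1/(2*(j:ℝ)+2)) ∧ (1 - 1/(2*(j:ℝ)+2)) ≤ 1 := by
  have hj : (0:ℝ) ≤ (j:ℝ) := Nat.cast_nonneg j
  refine ⟨?_, ?_, ?_⟩
  · have h1 : 1/(2*(j:ℝ)+1) ≤ 1 := by
      rw [div_le_one (by positivity)]; linarith
    linarith
  · have h2 : 1/(2*(j:ℝ)+2) ≤ 1/(2*(j:ℝ)+1) := by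
      apply div_le_div_of_nonneg_left (by norm_num) (by positivity) (by linarith)
    linarith
  · have h3 : 0 ≤ 1/(2*(j:ℝ)+2) := by positivity
    linarith

lemma pow_sub_pow_le_real {x y : ℝ} (hy : 0 ≤ y) (hxy : y ≤ x) (hx1 : x ≤ 1) (n : ℕ) :
    x^n - y^n ≤ (n:ℝ) * (x - y) := by
  induction n with
  | zero => simp
  | succ n ih =>
    have hx0 : 0 ≤ x := le_trans hy hxy
    have hpow : y^n ≤ x^n := pow_le_pow_left₀ hy hxy n
    have hyn1 : y^n ≤ 1 := pow_le_one₀ hy (le_trans hxy hx1)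
    have hy0 : (0:ℝ) ≤ y^n := by positivity
    calc x^(n+1) - y^(n+1) = x*(x^n - y^n) + y^n*(x - y) := by ring
      _ ≤ 1*(x^n - y^n) + 1*(x-y) := by
          apply add_le_add
          · exact mul_le_mul_of_nonneg_right hx1 (by linarith)
          · exact mul_le_mul_of_nonneg_right hyn1 (by linarith)
      _ ≤ 1*((n:ℝ)*(x-y)) + 1*(x-y) := by
          apply add_le_add _ le_rfl
          rw [one_mul, one_mul]
          exact ih
      _ = ((n:ℝ)+1) * (x-y) := by ring
      _ = (((n+1:ℕ)):ℝ) * (x-y) := by push_cast; ring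

lemma norm_diff_eq (n j : ℕ) :
    ‖rA j ^ n - rB j ^ n‖ = (1 - 1/(2*(j:ℝ)+2))^n - (1 - 1/(2*(j:ℝ)+1))^n := by
  obtain ⟨h0, h1, h2⟩ := sAB_facts j
  unfold rA rB
  rw [← Complex.ofReal_pow, ← Complex.ofReal_pow, ← Complex.ofReal_sub, Complex.norm_real,
    Real.norm_eq_abs]
  rw [abs_of_nonpos (by nlinarith [pow_le_pow_left₀ h0 h1 n])]
  ring

lemma diff_bound (n j : ℕ) : ‖rA j ^ n - rB j ^ n‖ ≤ (n:ℝ) * (((j:ℝ)+1)^(-(1+1):ℝ)) := by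
  obtain ⟨h0, h1, h2⟩ := sAB_facts j
  rw [norm_diff_eq]
  have hd : (1 - 1/(2*(j:ℝ)+2)) - (1 - 1/(2*(j:ℝ)+1)) ≤ ((j:ℝ)+1)^(-(1+1):ℝ) := by
    have hrw : ((j:ℝ)+1)^(-(1+1):ℝ) = (((j:ℝ)+1)*((j:ℝ)+1))⁻¹ := by
      rw [show (-(1+1):ℝ) = -((2:ℕ):ℝ) by norm_num, Real.rpow_neg (by positivity),
        Real.rpow_natCast, pow_two]
    have heq : (1 - 1/(2*(j:ℝ)+2)) - (1 - 1/(2*(j:ℝ)+1))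
        = ((2*(j:ℝ)+1)*(2*(j:ℝ)+2))⁻¹ := by
      rw [show (1 - 1/(2*(j:ℝ)+2)) - (1 - 1/(2*(j:ℝ)+1)) = 1/(2*(j:ℝ)+1) - 1/(2*(j:ℝ)+2)
        by ring, inv_eq_one_div, div_sub_div _ _ (by positivity) (by positivity)]
      norm_num
    rw [hrw, heq]
    apply inv_anti₀ (by positivity)
    nlinarith [Nat.cast_nonneg (α := ℝ) j]
  calc (1 - 1/(2*(j:ℝ)+2))^n - (1 - 1/(2*(j:ℝ)+1))^n
      ≤ (n:ℝ) * ((1 - 1/(2*(j:ℝ)+2)) - (1 - 1/(2*(j:ℝ)+1))) :=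
        pow_sub_pow_le_real h0 h1 h2 n
    _ ≤ (n:ℝ) * (((j:ℝ)+1)^(-(1+1):ℝ)) := by
        apply mul_le_mul_of_nonneg_left hd (Nat.cast_nonneg n)

lemma summable_diff (n : ℕ) : Summable (fun j : ℕ => ‖rA j ^ n - rB j ^ n‖) := by
  apply Summable.of_nonneg_of_le (fun j => norm_nonneg _) (fun j => diff_bound n j)
  exact (summable_aux_rpow one_pos).mul_left _

lemma tsum_diff_le (n : ℕ) : ∑' j : ℕ, ‖rA j ^ n - rB j ^ n‖ ≤ 1 := by
  set ψ : ℕ → ℝ := fun i => (1 - 1/((i:ℝ)+1))^n with hψ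
  have hψ01 : ∀ i : ℕ, 0 ≤ (1 - 1/((i:ℝ)+1)) ∧ (1 - 1/((i:ℝ)+1)) ≤ 1 := by
    intro i
    constructor
    · have : 1/((i:ℝ)+1) ≤ 1 := by
        rw [div_le_one (by positivity)]; linarith [Nat.cast_nonneg (α := ℝ) i]
      linarith
    · have : 0 ≤ 1/((i:ℝ)+1) := by positivity
      linarith
  have hψmono : ∀ i : ℕ, ψ i ≤ ψ (i+1) := by
    intro i
    apply pow_le_pow_left₀ (hψ01 i).1
    have h1 : 1/((i:ℝ)+1+1) ≤ 1/((i:ℝ)+1) := by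
      apply div_le_div_of_nonneg_left (by norm_num) (by positivity) (by linarith)
    push_cast
    linarith
  have hψb : ∀ i : ℕ, 0 ≤ ψ i ∧ ψ i ≤ 1 := by
    intro i
    constructor
    · exact pow_nonneg (hψ01 i).1 n
    · exact pow_le_one₀ (hψ01 i).1 (hψ01 i).2
  have hterm : ∀ j : ℕ, ‖rA j ^ n - rB j ^ n‖ = ψ (2*j+1) - ψ (2*j) := by
    intro j
    rw [norm_diff_eq, hψ]
    simp only
    congr 2 <;> push_cast <;> ring
  have hpartial : ∀ N : ℕ, ∑ j ∈ range N, (ψ (2*j+1) - ψ (2*j)) ≤ ψ (2*N) - ψ 0 := by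
    intro N
    induction N with
    | zero => simp
    | succ N ih =>
      rw [Finset.sum_range_succ]
      have h1 := hψmono (2*N+1)
      have h2 : 2*(N+1) = 2*N+1+1 := by ring
      rw [h2]
      linarith
  have hsum : Summable (fun j : ℕ => ψ (2*j+1) - ψ (2*j)) :=
    (summable_diff n).congr (fun j => hterm j)
  calc ∑' j : ℕ, ‖rA j ^ n - rB j ^ n‖ = ∑' j : ℕ, (ψ (2*j+1) - ψ (2*j)) :=
        tsum_congr hterm
    _ ≤ 1 := by
        apply Summable.tsum_le_of_sum_range_le hsum
        intro N
        have := hpartial N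
        have h1 := (hψb (2*N)).2
        have h2 := (hψb 0).1
        linarith

lemma hasSum_W_slice (s : ℂ) (j : ℕ) :
    HasSum (fun n : ℕ => (rA j ^ n - rB j ^ n) * pochNewton n s) (etaTerm s j) := by
  have h1 : HasSum (fun n : ℕ => pochNewton n s * rA j ^ n) (((2*(j:ℝ)+1 : ℝ):ℂ)^(-s)) := by
    have h := hasSum_poch_inv s (m := 2*j+1) (by omega)
    have e1 : (((1 - 1/(((2*j+1:ℕ)):ℝ)) : ℝ):ℂ) = rA j := by
      unfold rA; push_cast; ring
    have e2 : (((2*j+1 : ℕ)):ℂ) = ((2*(j:ℝ)+1 : ℝ):ℂ) := by push_cast; ring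
    rw [e1, e2] at h
    exact h
  have h2 : HasSum (fun n : ℕ => pochNewton n s * rB j ^ n) (((2*(j:ℝ)+2 : ℝ):ℂ)^(-s)) := by
    have h := hasSum_poch_inv s (m := 2*j+2) (by omega)
    have e1 : (((1 - 1/(((2*j+2:ℕ)):ℝ)) : ℝ):ℂ) = rB j := by
      unfold rB; push_cast; ring
    have e2 : (((2*j+2 : ℕ)):ℂ) = ((2*(j:ℝ)+2 : ℝ):ℂ) := by push_cast; ring
    rw [e1, e2] at h
    exact h
  have h3 := h1.sub h2
  rw [etaTerm_eq_cpow]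
  have hfun : (fun n : ℕ => (rA j ^ n - rB j ^ n) * pochNewton n s)
      = fun n : ℕ => pochNewton n s * rA j ^ n - pochNewton n s * rB j ^ n := by
    funext n; ring
  rw [hfun]
  exact h3

set_option maxHeartbeats 1000000 in
lemma hasSum_inner {s : ℂ} (hs : 0 < s.re) :
    HasSum (fun n : ℕ => (∑' j : ℕ, (rA j ^ n - rB j ^ n)) * pochNewton n s) (etaSum s) := by
  set W : ℕ × ℕ → ℂ := fun p => (rA p.2 ^ p.1 - rB p.2 ^ p.1) * pochNewton p.1 s with hWdef
  have hW : Summable W := by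
    apply Summable.of_norm
    apply (summable_prod_of_nonneg (fun p => norm_nonneg _)).2
    constructor
    · intro n
      simp only [hWdef, norm_mul]
      exact (summable_diff n).mul_right _
    · simp only [hWdef, norm_mul]
      apply Summable.of_nonneg_of_le
        (fun n => tsum_nonneg (fun j => by positivity))
        _ (summable_norm_pochNewton hs)
      intro n
      rw [tsum_mul_right]
      calc (∑' j : ℕ, ‖rA j ^ n - rB j ^ n‖) * ‖pochNewton n s‖
          ≤ 1 * ‖pochNewton n s‖ :=
            mul_le_mul_of_nonneg_right (tsum_diff_le n) (norm_nonneg _)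
        _ = ‖pochNewton n s‖ := one_mul _
  have hfib : ∀ n : ℕ, HasSum (fun j : ℕ => W (n, j))
      ((∑' j : ℕ, (rA j ^ n - rB j ^ n)) * pochNewton n s) := by
    intro n
    have hsummable : Summable (fun j : ℕ => rA j ^ n - rB j ^ n) :=
      Summable.of_norm (summable_diff n)
    exact hsummable.hasSum.mul_right _
  have hg := hW.hasSum.prod_fiberwise hfib
  have hWs : Summable (fun p : ℕ × ℕ => W p.swap) := hW.prod_symm
  have h2 : HasSum (fun j : ℕ => etaTerm s j) (∑' p : ℕ × ℕ, W p.swap) := by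
    apply hWs.hasSum.prod_fiberwise
    intro j
    exact hasSum_W_slice s j
  have h3 : ∑' p : ℕ × ℕ, W p.swap = ∑' p : ℕ × ℕ, W p :=
    (Equiv.prodComm ℕ ℕ).tsum_eq W
  have h4 : etaSum s = ∑' p : ℕ × ℕ, W p := by
    rw [← h3]
    exact h2.tsum_eq ▸ rfl
  rw [← h4] at hg
  exact hg

/-- Newton interpolation of the Dirichlet eta function: for `Re s > 0`, the Newton series
`∑_{n} (∑_{k=0}^n P_k(n) η(k)) P_n(s)` converges to `η(s)`. -/
theorem newton_series_eta (s : ℂ) (hs : 0 < s.re) :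
    Tendsto (fun N : ℕ => ∑ n ∈ Finset.range N,
        (∑ k ∈ Finset.range (n + 1), pochNewton k (n : ℂ) * dirichletEta (k : ℂ)) *
          pochNewton n s)
      atTop (𝓝 (dirichletEta s)) := by
  have hA : HasSum (fun n : ℕ => (1/2 : ℂ) * pochNewton n s) 0 := by
    have h := (hasSum_pochNewton_zero hs).mul_left (1/2 : ℂ)
    simpa using h
  have hB := hasSum_inner hs
  have hAB := hA.add hB
  rw [zero_add] at hAB
  have hfun : (fun n : ℕ => (1/2 : ℂ) * pochNewton n s
        + (∑' j : ℕ, (rA j ^ n - rB j ^ n)) * pochNewton n s)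
      = fun n : ℕ => (∑ k ∈ Finset.range (n + 1), pochNewton k (n : ℂ) * dirichletEta (k : ℂ)) *
          pochNewton n s := by
    funext n
    rw [coeff_eq n]
    ring
  rw [hfun] at hAB
  rw [show dirichletEta s = etaSum s from eta_eq_etaSum hs]
  exact hAB.tendsto_sum_nat
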